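/- Let F : A × X → X be an f-action. Then (ΩF) ∘ λ : ΩA × ΩX → ΩX is homotopic to μ ∘ (Ωf × id), where μ is the loop multiplication on ΩX and λ : ΩA × ΩX → Ω(A × X) is the canonical homeomorphism λ(a,b)(t) = (a(t),b(t)). In particular, (ΩF) ∘ λ is a μ-associative Ωf-action. -/

import Mathlib

open ContinuousMap

def incl₁ {A X : Type*} [TopologicalSpace A] [TopologicalSpace X] (x₀ : X) : C(A, A × X) :=
  (ContinuousMap.id A).prodMk (ContinuousMap.const A x₀)

def incl₂ {A X : Type*} [TopologicalSpace A] [TopologicalSpace X] (a₀ : A) : C(X, A × X) :=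
  (ContinuousMap.const X a₀).prodMk (ContinuousMap.id X)

def IsAction {A X : Type*} [TopologicalSpace A] [TopologicalSpace X] (a₀ : A) (x₀ : X)
    (F : C(A × X, X)) (f : C(A, X)) : Prop :=
  (F.comp (incl₂ a₀)).HomotopicRel (ContinuousMap.id X) {x₀} ∧
  (F.comp (incl₁ x₀)).HomotopicRel f {a₀}

open ContinuousMap unitInterval Set

@[fun_prop]
lemma Continuous.pathExtend'' {Z X : Type*} [TopologicalSpace Z] [TopologicalSpace X] {x y : X}
    {γ : Z → Path x y} {f : Z → ℝ} (hγ : Continuous γ) (hf : Continuous f) :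
    Continuous fun z => (γ z).extend (f z) :=
  Continuous.pathExtend (Path.continuous_uncurry_iff.mpr hγ) hf

def pathFam {D X : Type*} [TopologicalSpace D] [TopologicalSpace X] (x₀ : X)
    (g : C(D × ℝ, X)) (h0 : ∀ d, g (d, 0) = x₀) (h1 : ∀ d, g (d, 1) = x₀) :
    C(D, Path x₀ x₀) :=
  ⟨fun d => { toFun := fun t => g (d, (t : ℝ))
              continuous_toFun := by fun_prop
              source' := h0 d
              target' := h1 d },
   Path.continuous_uncurry_iff.mp (by
     show Continuous fun p : D × I => g (p.1, (p.2 : ℝ))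
     fun_prop)⟩

@[simp] lemma pathFam_apply {D X : Type*} [TopologicalSpace D] [TopologicalSpace X] (x₀ : X)
    (g : C(D × ℝ, X)) (h0 : ∀ d, g (d, 0) = x₀) (h1 : ∀ d, g (d, 1) = x₀) (d : D) (t : I) :
    pathFam x₀ g h0 h1 d t = g (d, (t : ℝ)) := rfl

lemma trans_eval {X : Type*} [TopologicalSpace X] {x y z : X} (γ : Path x y) (γ' : Path y z)
    (t : I) : (γ.trans γ') t =
      if (t : ℝ) ≤ 1/2 then γ.extend (2*(t:ℝ)) else γ'.extend (2*(t:ℝ)-1) := by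
  norm_num [Path.trans]

lemma trans_extend {X : Type*} [TopologicalSpace X] {x y z : X} (γ : Path x y) (γ' : Path y z)
    {u : ℝ} (h0 : 0 ≤ u) (h1 : u ≤ 1) :
    (γ.trans γ').extend u = if u ≤ 1/2 then γ.extend (2*u) else γ'.extend (2*u-1) := by
  rw [Path.extend_apply _ ⟨h0, h1⟩]
  norm_num [Path.trans]

noncomputable def rp (t : ℝ) : ℝ := if t ≤ 1/2 then t/2 else if t ≤ 3/4 then t - 1/4 else 2*t - 1

lemma rp_cont : Continuous rp := by
  unfold rp
  apply Continuous.if_le _ _ continuous_id continuous_const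
  · intro x hx; simp only [id_eq] at hx; subst hx; norm_num
  · fun_prop
  · apply Continuous.if_le _ _ continuous_id continuous_const
    · intro x hx; simp only [id_eq] at hx; subst hx; norm_num
    all_goals fun_prop

lemma rp_zero : rp 0 = 0 := by norm_num [rp]
lemma rp_one : rp 1 = 1 := by norm_num [rp]

lemma assoc_extend {X : Type*} [TopologicalSpace X] {x₀ : X} (A B C : Path x₀ x₀) (t : I) :
    ((A.trans B).trans C).extend (rp (t : ℝ)) = (A.trans (B.trans C)) t := by
  obtain ⟨u, hu0, hu1⟩ : ∃ u : ℝ, 0 ≤ u ∧ u ≤ 1 ∧ (t : ℝ) = u := ⟨t, t.2.1, t.2.2, rfl⟩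
  obtain ⟨hu1, htu⟩ := hu1
  rw [trans_eval, htu]
  by_cases h1 : u ≤ 1/2
  · rw [if_pos h1]
    have hr : rp u = u/2 := if_pos h1
    rw [hr, trans_extend _ _ (by linarith) (by linarith), if_pos (by linarith),
      show 2*(u/2) = u by ring, trans_extend _ _ hu0 hu1, if_pos h1]
  · rw [if_neg h1]
    by_cases h2 : u ≤ 3/4
    · have hr : rp u = u - 1/4 := by rw [rp, if_neg h1, if_pos h2]
      rw [hr, trans_extend _ _ (by linarith) (by linarith), if_pos (by linarith),
        show 2*(u-1/4) = 2*u - 1/2 by ring,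
        trans_extend _ _ (by linarith) (by linarith), if_neg (by intro h; linarith),
        trans_extend _ _ (by linarith) (by linarith), if_pos (by linarith),
        show (2*(2*u-1/2)-1:ℝ) = 2*(2*u-1) by ring]
    · have hr : rp u = 2*u - 1 := by rw [rp, if_neg h1, if_neg h2]
      rw [hr, trans_extend _ _ (by linarith) (by linarith), if_neg (by intro h; linarith),
        trans_extend _ _ (by linarith) (by linarith), if_neg (by intro h; linarith)]

def loopHomotopyRel {D X : Type*} [TopologicalSpace D] [TopologicalSpace X] {x₀ : X}
    {f₀ f₁ : C(D, Path x₀ x₀)} {S : Set D}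
    (g : C((I × D) × ℝ, X))
    (h0 : ∀ q, g (q, 0) = x₀) (h1 : ∀ q, g (q, 1) = x₀)
    (hs0 : ∀ d (t : I), g ((0, d), (t : ℝ)) = f₀ d t)
    (hs1 : ∀ d (t : I), g ((1, d), (t : ℝ)) = f₁ d t)
    (hrel : ∀ (s : I) d, d ∈ S → ∀ t : I, g ((s, d), (t : ℝ)) = f₀ d t) :
    f₀.HomotopyRel f₁ S where
  toContinuousMap := pathFam x₀ g h0 h1
  map_zero_left d := by ext t; exact hs0 d t
  map_one_left d := by ext t; exact hs1 d t
  prop' s d hd := by ext t; exact hrel s d hd t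

/-- Let `F` be an `f`-action of `A` on `X`.  Let `λ` be the canonical homeomorphism
`ΩA × ΩX → Ω(A × X)`, `μ` the loop concatenation on `ΩX`, and `ΩF`, `Ωf` the looped
maps (each characterized by its pointwise formula).  Then
`(ΩF) ∘ λ ≃ μ ∘ (Ωf × id)` by a based homotopy; in particular `(ΩF) ∘ λ` is a
`μ`-associative `Ωf`-action of `ΩA` on `ΩX`. -/
theorem loop_action {A X : Type*} [TopologicalSpace A] [TopologicalSpace X]
    (a₀ : A) (x₀ : X)
    (F : C(A × X, X)) (f : C(A, X)) (hF : IsAction a₀ x₀ F f) (hf : f a₀ = x₀)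
    (lam : C(Path a₀ a₀ × Path x₀ x₀, Path (a₀, x₀) (a₀, x₀)))
    (hlam : ∀ p t, lam p t = (p.1 t, p.2 t))
    (ΩF : C(Path (a₀, x₀) (a₀, x₀), Path x₀ x₀))
    (hΩF : ∀ γ t, ΩF γ t = F (γ t))
    (Ωf : C(Path a₀ a₀, Path x₀ x₀))
    (hΩf : ∀ γ t, Ωf γ t = f (γ t))
    (μ : C(Path x₀ x₀ × Path x₀ x₀, Path x₀ x₀))
    (hμ : ∀ p, μ p = p.1.trans p.2) :
    (ΩF.comp lam).HomotopicRel (μ.comp (Ωf.prodMap (ContinuousMap.id (Path x₀ x₀))))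
      {(Path.refl a₀, Path.refl x₀)} ∧
    IsAction (Path.refl a₀) (Path.refl x₀) (ΩF.comp lam) Ωf ∧
    ContinuousMap.HomotopicRel
      ⟨fun p : Path a₀ a₀ × Path x₀ x₀ × Path x₀ x₀ =>
        μ ((ΩF.comp lam) (p.1, p.2.1), p.2.2), by fun_prop⟩
      ⟨fun p : Path a₀ a₀ × Path x₀ x₀ × Path x₀ x₀ =>
        (ΩF.comp lam) (p.1, μ p.2), by fun_prop⟩
      {(Path.refl a₀, Path.refl x₀, Path.refl x₀)} := by
  classical
  obtain ⟨⟨K₂⟩, ⟨K₁⟩⟩ := hF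
  have hK₂0 : ∀ x, K₂ (0, x) = F (a₀, x) := fun x => K₂.apply_zero x
  have hK₂1 : ∀ x, K₂ (1, x) = x := fun x => K₂.apply_one x
  have hK₂rel : ∀ s : I, K₂ (s, x₀) = x₀ := fun s => K₂.eq_snd s (Set.mem_singleton x₀)
  have hK₁0 : ∀ a, K₁ (0, a) = F (a, x₀) := fun a => K₁.apply_zero a
  have hK₁1 : ∀ a, K₁ (1, a) = f a := fun a => K₁.apply_one a
  have hK₁rel : ∀ s : I, K₁ (s, a₀) = x₀ := fun s =>
    (K₁.eq_snd s (Set.mem_singleton a₀)).trans hf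
  have hFax : F (a₀, x₀) = x₀ := by rw [← hK₂0 x₀, hK₂rel 0]
  -- the "double speed" intermediate map
  let gM : C((Path a₀ a₀ × Path x₀ x₀) × ℝ, X) :=
    ⟨fun q => F (q.1.1.extend (min (2*q.2) 1), q.1.2.extend (2*q.2 - 1)), by fun_prop⟩
  have hM0 : ∀ d, gM (d, 0) = x₀ := by
    intro d
    show F (d.1.extend (min (2*(0:ℝ)) 1), d.2.extend (2*(0:ℝ) - 1)) = x₀
    rw [show min (2*(0:ℝ)) 1 = 0 by norm_num, show (2*(0:ℝ) - 1) = -1 by norm_num,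
      Path.extend_zero, d.2.extend_of_le_zero (by norm_num), hFax]
  have hM1 : ∀ d, gM (d, 1) = x₀ := by
    intro d
    show F (d.1.extend (min (2*(1:ℝ)) 1), d.2.extend (2*(1:ℝ) - 1)) = x₀
    rw [show min (2*(1:ℝ)) 1 = 1 by norm_num, show (2*(1:ℝ) - 1) = 1 by norm_num,
      Path.extend_one, Path.extend_one, hFax]
  let Mc : C(Path a₀ a₀ × Path x₀ x₀, Path x₀ x₀) := pathFam x₀ gM hM0 hM1
  -- first homotopy : reparametrize
  let gA : C((I × (Path a₀ a₀ × Path x₀ x₀)) × ℝ, X) :=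
    ⟨fun q => F (q.1.2.1.extend (min ((1 + (q.1.1 : ℝ))*q.2) 1),
        q.1.2.2.extend ((1 + (q.1.1 : ℝ))*q.2 - (q.1.1 : ℝ))), by fun_prop⟩
  have HA : (ΩF.comp lam).HomotopyRel Mc {(Path.refl a₀, Path.refl x₀)} := by
    refine loopHomotopyRel gA ?_ ?_ ?_ ?_ ?_
    · intro q
      show F (q.2.1.extend (min ((1 + (q.1 : ℝ))*0) 1),
        q.2.2.extend ((1 + (q.1 : ℝ))*0 - (q.1 : ℝ))) = x₀
      rw [show (1 + (q.1 : ℝ))*0 = 0 by ring, show min (0:ℝ) 1 = 0 by norm_num,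
        show (0:ℝ) - (q.1 : ℝ) = -(q.1:ℝ) by ring, Path.extend_zero,
        q.2.2.extend_of_le_zero (neg_nonpos.mpr q.1.2.1), hFax]
    · intro q
      show F (q.2.1.extend (min ((1 + (q.1 : ℝ))*1) 1),
        q.2.2.extend ((1 + (q.1 : ℝ))*1 - (q.1 : ℝ))) = x₀
      rw [show (1 + (q.1 : ℝ))*1 = 1 + (q.1:ℝ) by ring,
        min_eq_right (by linarith [q.1.2.1] : (1:ℝ) ≤ 1 + (q.1:ℝ)),
        show (1 + (q.1:ℝ)) - (q.1 : ℝ) = 1 by ring, Path.extend_one, Path.extend_one, hFax]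
    · intro d t
      show F (d.1.extend (min ((1 + ((0:I) : ℝ))*(t:ℝ)) 1),
          d.2.extend ((1 + ((0:I) : ℝ))*(t:ℝ) - ((0:I) : ℝ))) = (ΩF.comp lam) d t
      rw [Set.Icc.coe_zero, show (1 + (0:ℝ))*(t:ℝ) = (t:ℝ) by ring,
        min_eq_left t.2.2, show (t:ℝ) - 0 = (t:ℝ) by ring,
        Path.extend_extends' d.1 t, Path.extend_extends' d.2 t]
      show F (d.1 t, d.2 t) = ΩF (lam d) t
      rw [hΩF, hlam]
    · intro d t
      show F (d.1.extend (min ((1 + ((1:I) : ℝ))*(t:ℝ)) 1),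
          d.2.extend ((1 + ((1:I) : ℝ))*(t:ℝ) - ((1:I) : ℝ))) = Mc d t
      rw [Set.Icc.coe_one, show (1 + (1:ℝ))*(t:ℝ) = 2*(t:ℝ) by ring]
      rfl
    · intro s d hd t
      simp only [Set.mem_singleton_iff] at hd; subst hd
      show F ((Path.refl a₀).extend _, (Path.refl x₀).extend _) =
        (ΩF.comp lam) (Path.refl a₀, Path.refl x₀) t
      show F ((Path.refl a₀).extend _, (Path.refl x₀).extend _) =
        ΩF (lam (Path.refl a₀, Path.refl x₀)) t
      rw [hΩF, hlam]
      rfl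
  -- second homotopy : use the action homotopies on each half
  let gB : C((I × (Path a₀ a₀ × Path x₀ x₀)) × ℝ, X) :=
    ⟨fun q => if q.2 ≤ 1/2 then K₁ (q.1.1, q.1.2.1.extend (2*q.2))
        else K₂ (q.1.1, q.1.2.2.extend (2*q.2 - 1)), by
      apply Continuous.if_le (K₁.continuous.comp (by fun_prop))
        (K₂.continuous.comp (by fun_prop)) continuous_snd continuous_const
      intro q hq
      show K₁ (q.1.1, q.1.2.1.extend (2*q.2)) = K₂ (q.1.1, q.1.2.2.extend (2*q.2 - 1))
      rw [show 2*q.2 - 1 = 0 by rw [hq]; norm_num, show 2*q.2 = 1 by rw [hq]; norm_num,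
        Path.extend_zero, Path.extend_one, hK₁rel, hK₂rel]⟩
  have HB : Mc.HomotopyRel (μ.comp (Ωf.prodMap (ContinuousMap.id (Path x₀ x₀))))
      {(Path.refl a₀, Path.refl x₀)} := by
    refine loopHomotopyRel gB ?_ ?_ ?_ ?_ ?_
    · intro q
      show (if (0:ℝ) ≤ 1/2 then K₁ (q.1, q.2.1.extend (2*0))
        else K₂ (q.1, q.2.2.extend (2*0 - 1))) = x₀
      rw [if_pos (by norm_num : (0:ℝ) ≤ 1/2), show 2*(0:ℝ) = 0 by ring, Path.extend_zero,
        hK₁rel]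
    · intro q
      show (if (1:ℝ) ≤ 1/2 then K₁ (q.1, q.2.1.extend (2*1))
        else K₂ (q.1, q.2.2.extend (2*1 - 1))) = x₀
      rw [if_neg (by norm_num : ¬ (1:ℝ) ≤ 1/2), show 2*(1:ℝ) - 1 = 1 by ring,
        Path.extend_one, hK₂rel]
    · intro d t
      show (if (t:ℝ) ≤ 1/2 then K₁ ((0:I), d.1.extend (2*(t:ℝ)))
          else K₂ ((0:I), d.2.extend (2*(t:ℝ) - 1))) =
        F (d.1.extend (min (2*(t:ℝ)) 1), d.2.extend (2*(t:ℝ) - 1))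
      by_cases h : (t:ℝ) ≤ 1/2
      · rw [if_pos h, hK₁0, min_eq_left (by linarith : 2*(t:ℝ) ≤ 1),
          d.2.extend_of_le_zero (by linarith : 2*(t:ℝ) - 1 ≤ 0)]
      · rw [if_neg h, hK₂0, min_eq_right (by linarith [t.2.2] : (1:ℝ) ≤ 2*(t:ℝ)),
          Path.extend_one]
    · intro d t
      have hR : (μ.comp (Ωf.prodMap (ContinuousMap.id (Path x₀ x₀)))) d =
          (Ωf d.1).trans d.2 := hμ (Ωf d.1, d.2)
      rw [hR, trans_eval]
      show (if (t:ℝ) ≤ 1/2 then K₁ ((1:I), d.1.extend (2*(t:ℝ)))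
          else K₂ ((1:I), d.2.extend (2*(t:ℝ) - 1))) =
        if (t:ℝ) ≤ 1/2 then (Ωf d.1).extend (2*(t:ℝ)) else d.2.extend (2*(t:ℝ) - 1)
      by_cases h : (t:ℝ) ≤ 1/2
      · rw [if_pos h, if_pos h, hK₁1,
          Path.extend_apply d.1 ⟨by linarith [t.2.1], by linarith⟩,
          Path.extend_apply (Ωf d.1) ⟨by linarith [t.2.1], by linarith⟩, hΩf]
      · rw [if_neg h, if_neg h, hK₂1]
    · intro s d hd t
      simp only [Set.mem_singleton_iff] at hd; subst hd
      show (if (t:ℝ) ≤ 1/2 then K₁ (s, (Path.refl a₀).extend (2*(t:ℝ)))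
          else K₂ (s, (Path.refl x₀).extend (2*(t:ℝ) - 1))) =
        F ((Path.refl a₀).extend (min (2*(t:ℝ)) 1), (Path.refl x₀).extend (2*(t:ℝ) - 1))
      split_ifs
      · exact (hK₁rel s).trans hFax.symm
      · exact (hK₂rel s).trans hFax.symm
  have H1 := HA.trans HB
  refine ⟨⟨H1⟩, ⟨?_, ?_⟩, ?_⟩
  · -- action axiom 1 : restriction to ΩX is homotopic to the identity
    refine ⟨loopHomotopyRel (f₀ := (ΩF.comp lam).comp (incl₂ (Path.refl a₀)))
      (f₁ := ContinuousMap.id _) (S := {Path.refl x₀})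
      ⟨fun q => K₂ (q.1.1, q.1.2.extend q.2), K₂.continuous.comp (by fun_prop)⟩
      ?_ ?_ ?_ ?_ ?_⟩
    · intro q
      show K₂ (q.1, q.2.extend 0) = x₀
      rw [Path.extend_zero]; exact hK₂rel _
    · intro q
      show K₂ (q.1, q.2.extend 1) = x₀
      rw [Path.extend_one]; exact hK₂rel _
    · intro β t
      show K₂ ((0:I), β.extend (t:ℝ)) = ΩF (lam (Path.refl a₀, β)) t
      rw [Path.extend_extends' β t, hK₂0, hΩF, hlam]; rfl
    · intro β t
      show K₂ ((1:I), β.extend (t:ℝ)) = β t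
      rw [Path.extend_extends' β t, hK₂1]
    · intro s β hβ t
      simp only [Set.mem_singleton_iff] at hβ; subst hβ
      show K₂ (s, (Path.refl x₀).extend (t:ℝ)) = ΩF (lam (Path.refl a₀, Path.refl x₀)) t
      rw [Path.refl_extend, hΩF, hlam]
      exact (hK₂rel s).trans hFax.symm
  · -- action axiom 2 : restriction to ΩA is homotopic to Ωf
    refine ⟨loopHomotopyRel (f₀ := (ΩF.comp lam).comp (incl₁ (Path.refl x₀)))
      (f₁ := Ωf) (S := {Path.refl a₀})
      ⟨fun q => K₁ (q.1.1, q.1.2.extend q.2), K₁.continuous.comp (by fun_prop)⟩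
      ?_ ?_ ?_ ?_ ?_⟩
    · intro q
      show K₁ (q.1, q.2.extend 0) = x₀
      rw [Path.extend_zero]; exact hK₁rel _
    · intro q
      show K₁ (q.1, q.2.extend 1) = x₀
      rw [Path.extend_one]; exact hK₁rel _
    · intro α t
      show K₁ ((0:I), α.extend (t:ℝ)) = ΩF (lam (α, Path.refl x₀)) t
      rw [Path.extend_extends' α t, hK₁0, hΩF, hlam]; rfl
    · intro α t
      show K₁ ((1:I), α.extend (t:ℝ)) = Ωf α t
      rw [Path.extend_extends' α t, hK₁1, hΩf]
    · intro s α hα t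
      simp only [Set.mem_singleton_iff] at hα; subst hα
      show K₁ (s, (Path.refl a₀).extend (t:ℝ)) = ΩF (lam (Path.refl a₀, Path.refl x₀)) t
      rw [Path.refl_extend, hΩF, hlam]
      exact (hK₁rel s).trans hFax.symm
  · -- μ-associativity
    set G := ΩF.comp lam with hG
    let P₀ : C(Path a₀ a₀ × Path x₀ x₀ × Path x₀ x₀, Path x₀ x₀) :=
      ⟨fun p => μ (μ (Ωf p.1, p.2.1), p.2.2), by fun_prop⟩
    let P₁ : C(Path a₀ a₀ × Path x₀ x₀ × Path x₀ x₀, Path x₀ x₀) :=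
      ⟨fun p => μ (Ωf p.1, μ (p.2.1, p.2.2)), by fun_prop⟩
    have hΩfr : Ωf (Path.refl a₀) = Path.refl x₀ := by
      ext u; rw [hΩf]; exact hf
    have hμrr : μ (Path.refl x₀, Path.refl x₀) = Path.refl x₀ := by
      rw [hμ]; exact Path.refl_trans_refl
    have C1 : ContinuousMap.HomotopyRel
        (⟨fun p : Path a₀ a₀ × Path x₀ x₀ × Path x₀ x₀ =>
          μ (G (p.1, p.2.1), p.2.2), by fun_prop⟩ : C(_, Path x₀ x₀)) P₀
        {(Path.refl a₀, Path.refl x₀, Path.refl x₀)} := by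
      refine ⟨⟨⟨fun q => μ (H1 (q.1, (q.2.1, q.2.2.1)), q.2.2.2), ?_⟩, ?_, ?_⟩, ?_⟩
      · exact μ.continuous.comp ((H1.continuous.comp (continuous_fst.prodMk
          ((continuous_fst.comp continuous_snd).prodMk
            (continuous_fst.comp (continuous_snd.comp continuous_snd))))).prodMk
          (continuous_snd.comp (continuous_snd.comp continuous_snd)))
      · intro p
        show μ (H1 (0, (p.1, p.2.1)), p.2.2) = μ (G (p.1, p.2.1), p.2.2)
        rw [H1.apply_zero]
      · intro p
        show μ (H1 (1, (p.1, p.2.1)), p.2.2) = P₀ p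
        rw [H1.apply_one]; rfl
      · intro s x hx
        simp only [Set.mem_singleton_iff] at hx; subst hx
        show μ (H1 (s, (Path.refl a₀, Path.refl x₀)), Path.refl x₀) =
          μ (G (Path.refl a₀, Path.refl x₀), Path.refl x₀)
        rw [H1.eq_fst s (Set.mem_singleton _)]
    have C3 : ContinuousMap.HomotopyRel P₁
        (⟨fun p : Path a₀ a₀ × Path x₀ x₀ × Path x₀ x₀ =>
          G (p.1, μ p.2), by fun_prop⟩ : C(_, Path x₀ x₀))
        {(Path.refl a₀, Path.refl x₀, Path.refl x₀)} := by
      refine ⟨⟨⟨fun q => H1.symm (q.1, (q.2.1, μ (q.2.2.1, q.2.2.2))), ?_⟩, ?_, ?_⟩, ?_⟩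
      · exact H1.symm.continuous.comp (continuous_fst.prodMk
          ((continuous_fst.comp continuous_snd).prodMk (μ.continuous.comp
            ((continuous_fst.comp (continuous_snd.comp continuous_snd)).prodMk
              (continuous_snd.comp (continuous_snd.comp continuous_snd))))))
      · intro p
        show H1.symm (0, (p.1, μ (p.2.1, p.2.2))) = P₁ p
        rw [H1.symm.apply_zero]; rfl
      · intro p
        show H1.symm (1, (p.1, μ (p.2.1, p.2.2))) = G (p.1, μ p.2)
        rw [H1.symm.apply_one]
      · intro s x hx
        simp only [Set.mem_singleton_iff] at hx; subst hx
        show H1.symm (s, (Path.refl a₀, μ (Path.refl x₀, Path.refl x₀))) =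
          P₁ (Path.refl a₀, Path.refl x₀, Path.refl x₀)
        rw [hμrr, H1.symm.eq_fst s (Set.mem_singleton _)]
        show μ (Ωf (Path.refl a₀), Path.refl x₀) =
          μ (Ωf (Path.refl a₀), μ (Path.refl x₀, Path.refl x₀))
        rw [hμrr]
    have C2 : ContinuousMap.HomotopyRel P₀ P₁
        {(Path.refl a₀, Path.refl x₀, Path.refl x₀)} := by
      refine loopHomotopyRel
        ⟨fun q => (μ (μ (Ωf q.1.2.1, q.1.2.2.1), q.1.2.2.2)).extend
          ((1 - (q.1.1 : ℝ))*q.2 + (q.1.1 : ℝ) * rp q.2), ?_⟩ ?_ ?_ ?_ ?_ ?_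
      · refine Continuous.pathExtend'' (by fun_prop) ?_
        exact (Continuous.mul (by fun_prop) continuous_snd).add
          (Continuous.mul (by fun_prop) (rp_cont.comp continuous_snd))
      · intro q
        show (μ (μ (Ωf q.2.1, q.2.2.1), q.2.2.2)).extend
          ((1 - (q.1 : ℝ))*0 + (q.1 : ℝ) * rp 0) = x₀
        rw [rp_zero, show (1 - (q.1 : ℝ))*0 + (q.1 : ℝ)*0 = 0 by ring, Path.extend_zero]
      · intro q
        show (μ (μ (Ωf q.2.1, q.2.2.1), q.2.2.2)).extend
          ((1 - (q.1 : ℝ))*1 + (q.1 : ℝ) * rp 1) = x₀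
        rw [rp_one, show (1 - (q.1 : ℝ))*1 + (q.1 : ℝ)*1 = 1 by ring, Path.extend_one]
      · intro d t
        show (μ (μ (Ωf d.1, d.2.1), d.2.2)).extend
          ((1 - ((0:I) : ℝ))*(t:ℝ) + ((0:I) : ℝ) * rp (t:ℝ)) = P₀ d t
        rw [Set.Icc.coe_zero,
          show (1 - (0:ℝ))*(t:ℝ) + (0:ℝ)*rp (t:ℝ) = (t:ℝ) by ring,
          Path.extend_extends' _ t]
        rfl
      · intro d t
        show (μ (μ (Ωf d.1, d.2.1), d.2.2)).extend
          ((1 - ((1:I) : ℝ))*(t:ℝ) + ((1:I) : ℝ) * rp (t:ℝ)) = P₁ d t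
        rw [Set.Icc.coe_one,
          show (1 - (1:ℝ))*(t:ℝ) + (1:ℝ)*rp (t:ℝ) = rp (t:ℝ) by ring]
        show _ = μ (Ωf d.1, μ (d.2.1, d.2.2)) t
        rw [hμ (μ (Ωf d.1, d.2.1), d.2.2), hμ (Ωf d.1, d.2.1),
          hμ (Ωf d.1, μ (d.2.1, d.2.2)), hμ (d.2.1, d.2.2)]
        exact assoc_extend _ _ _ t
      · intro s d hd t
        simp only [Set.mem_singleton_iff] at hd; subst hd
        show (μ (μ (Ωf (Path.refl a₀), Path.refl x₀), Path.refl x₀)).extend _ =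
          P₀ (Path.refl a₀, Path.refl x₀, Path.refl x₀) t
        show (μ (μ (Ωf (Path.refl a₀), Path.refl x₀), Path.refl x₀)).extend _ =
          μ (μ (Ωf (Path.refl a₀), Path.refl x₀), Path.refl x₀) t
        rw [hΩfr, hμrr, hμrr, Path.refl_extend]
        rfl
    exact ContinuousMap.HomotopicRel.trans ⟨C1⟩ (ContinuousMap.HomotopicRel.trans ⟨C2⟩ ⟨C3⟩)
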